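/- Let G be a group carrying an invariant finitely additive probability measure μ and let c : G → Fin r be any coloring of G. Then there exists a color i ∈ Fin r such that the color class c⁻¹({i}) is a large ←IP₀ set. -/

import Mathlib

/-- A two-sided invariant finitely additive probability measure on a group `G`. -/
structure IsInvFAPM {G : Type*} [Group G] (μ : Set G → ℝ) : Prop where
  nonneg : ∀ A : Set G, 0 ≤ μ A
  total : μ (Set.univ : Set G) = 1
  additive : ∀ A B : Set G, Disjoint A B → μ (A ∪ B) = μ A + μ B
  left_invariant : ∀ (g : G) (A : Set G), μ ((g * ·) '' A) = μ A
  right_invariant : ∀ (g : G) (A : Set G), μ ((· * g) '' A) = μ A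
/-- `Many μ k P` says that property `P` of `(k+1)`-tuples holds for many tuples:
`μ({x₀ : μ({x₁ : … μ({x_k : P(x₀,…,x_k)}) > 0 …}) > 0}) > 0`. -/
def Many {G : Type*} (μ : Set G → ℝ) : (k : ℕ) → ((Fin (k + 1) → G) → Prop) → Prop
  | 0, P => 0 < μ {x | P ![x]}
  | k + 1, P => 0 < μ {x₀ | Many μ k fun x => P (Fin.cons x₀ x)}
/-- `FPdec x` is the set of all products `x_{i_1} ⋯ x_{i_m}` over nonempty sets of
indices `{i_1 > i_2 > … > i_m}`, i.e. the factors are multiplied in decreasing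
order of index (this is `FP(x_k, …, x_0)`). -/
def FPdec {G : Type*} [Group G] {k : ℕ} (x : Fin (k + 1) → G) : Set G :=
  {g | ∃ F : Finset (Fin (k + 1)), F.Nonempty ∧ g = ((F.sort (· ≤ ·)).reverse.map x).prod}

/-- A set `A` is a large `←IP₀` set if for every `k` there are many tuples
`(x₀, …, x_k)` with `FP(x_k, …, x₀) ⊆ A`. -/
def LargeIP0 {G : Type*} [Group G] (μ : Set G → ℝ) (A : Set G) : Prop :=
  ∀ k : ℕ, Many μ k fun x => FPdec x ⊆ A

open Filter Set

section MeasureLemmas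
variable {G : Type*} [Group G] {μ : Set G → ℝ}

theorem IP0Aux.mu_empty (hμ : IsInvFAPM μ) : μ (∅ : Set G) = 0 := by
  have h := hμ.additive Set.univ ∅ (by simp)
  simp only [Set.union_empty] at h
  linarith

theorem IP0Aux.mu_mono (hμ : IsInvFAPM μ) {A B : Set G} (h : A ⊆ B) : μ A ≤ μ B := by
  have hd : Disjoint A (B \ A) := Set.disjoint_sdiff_right
  have h2 : μ (A ∪ (B \ A)) = μ A + μ (B \ A) := hμ.additive _ _ hd
  rw [Set.union_diff_cancel h] at h2
  have := hμ.nonneg (B \ A)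
  linarith

theorem IP0Aux.pos_of_subset (hμ : IsInvFAPM μ) {A B : Set G} (h : A ⊆ B) (hA : 0 < μ A) :
    0 < μ B :=
  lt_of_lt_of_le hA (IP0Aux.mu_mono hμ h)

theorem IP0Aux.nonempty_of_pos (hμ : IsInvFAPM μ) {A : Set G} (hA : 0 < μ A) : A.Nonempty := by
  rcases A.eq_empty_or_nonempty with rfl | h
  · rw [IP0Aux.mu_empty hμ] at hA; exact absurd hA (lt_irrefl 0)
  · exact h

theorem IP0Aux.mu_right_shift (hμ : IsInvFAPM μ) (x : G) (A : Set G) :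
    μ {y | y * x ∈ A} = μ A := by
  have h : {y | y * x ∈ A} = (· * x⁻¹) '' A := by
    ext y
    constructor
    · intro hy; exact ⟨y * x, hy, by group⟩
    · rintro ⟨a, ha, rfl⟩; simpa [mul_assoc] using ha
  rw [h, hμ.right_invariant]

end MeasureLemmas

section RevSemigroup

/-- "Reversed" multiplication of ultrafilters: the outer variable is the *right* factor. -/
def IP0Aux.revMul {M : Type*} [Mul M] : Mul (Ultrafilter M) where
  mul U V := (fun x y => y * x) <$> U <*> V

attribute [local instance] IP0Aux.revMul

theorem IP0Aux.eventually_revMul {M : Type*} [Mul M] (U V : Ultrafilter M) (p : M → Prop) :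
    (∀ᶠ m in ↑(U * V), p m) ↔ ∀ᶠ x in U, ∀ᶠ y in V, p (y * x) := Iff.rfl

theorem IP0Aux.mem_revMul {M : Type*} [Mul M] {U V : Ultrafilter M} {s : Set M} :
    s ∈ U * V ↔ {x | {y | y * x ∈ s} ∈ V} ∈ U := Iff.rfl

/-- Semigroup structure on ultrafilters via reversed multiplication. -/
def IP0Aux.revSemigroup {M : Type*} [Semigroup M] : Semigroup (Ultrafilter M) :=
  { IP0Aux.revMul with
    mul_assoc := fun U V W => Ultrafilter.coe_inj.mp <| Filter.ext' fun p => by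
      simp only [IP0Aux.eventually_revMul, mul_assoc] }

attribute [local instance] IP0Aux.revSemigroup

theorem IP0Aux.continuous_revMul_left {M : Type*} [Semigroup M] (V : Ultrafilter M) :
    Continuous (· * V) :=
  ultrafilterBasis_is_basis.continuous_iff.2 <| Set.forall_mem_range.mpr fun s ↦
    ultrafilter_isOpen_basic { x : M | ∀ᶠ y in V, y * x ∈ s }

variable {G : Type*} [Group G] {μ : Set G → ℝ}

/-- The filter of co-null sets. -/
def IP0Aux.conullFilter (hμ : IsInvFAPM μ) : Filter G where
  sets := {A | μ Aᶜ ≤ 0}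
  univ_sets := by simp [IP0Aux.mu_empty hμ]
  sets_of_superset := by
    intro A B hA hAB
    exact le_trans (IP0Aux.mu_mono hμ (Set.compl_subset_compl.mpr hAB)) hA
  inter_sets := by
    intro A B hA hB
    simp only [Set.mem_setOf_eq, Set.compl_inter] at *
    have h1 : μ (Aᶜ ∪ Bᶜ) ≤ μ Aᶜ + μ Bᶜ := by
      have hd : Disjoint Aᶜ (Bᶜ \ Aᶜ) := Set.disjoint_sdiff_right
      have h2 := hμ.additive _ _ hd
      rw [Set.union_diff_self] at h2
      have := IP0Aux.mu_mono hμ (Set.diff_subset : Bᶜ \ Aᶜ ⊆ Bᶜ)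
      linarith
    linarith

/-- There is an idempotent ultrafilter all of whose members have positive measure. -/
theorem IP0Aux.exists_good_idem (hμ : IsInvFAPM μ) :
    ∃ U : Ultrafilter G, U * U = U ∧ ∀ A : Set G, A ∈ U → 0 < μ A := by
  classical
  set D : Set (Ultrafilter G) := {U | ∀ A : Set G, A ∈ U → 0 < μ A} with hD
  have hmem : ∀ U : Ultrafilter G, U ∈ D ↔ ∀ A : Set G, ¬ 0 < μ A → Aᶜ ∈ U := by
    intro U
    constructor
    · intro h A hA
      rw [Ultrafilter.compl_mem_iff_notMem]
      exact fun hAU => hA (h A hAU)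
    · intro h A hAU
      by_contra hA
      have := h A hA
      rw [Ultrafilter.compl_mem_iff_notMem] at this
      exact this hAU
  have hclosed : IsClosed D := by
    have : D = ⋂ (A : Set G) (_ : ¬ 0 < μ A), {U : Ultrafilter G | Aᶜ ∈ U} := by
      ext U; simp only [Set.mem_iInter, Set.mem_setOf_eq, hmem U]
    rw [this]
    exact isClosed_iInter fun A => isClosed_iInter fun _ => ultrafilter_isClosed_basic _
  have hne : D.Nonempty := by
    have hnb : (IP0Aux.conullFilter hμ).NeBot := by
      constructor
      intro hbot
      have : (∅ : Set G) ∈ IP0Aux.conullFilter hμ := hbot ▸ Filter.mem_bot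
      have h2 : μ (Set.univ : Set G) ≤ 0 := by simpa [IP0Aux.conullFilter] using this
      rw [hμ.total] at h2; linarith
    obtain ⟨U, hU⟩ := Ultrafilter.exists_le (IP0Aux.conullFilter hμ)
    refine ⟨U, fun A hAU => ?_⟩
    by_contra hA
    push_neg at hA
    have : Aᶜ ∈ IP0Aux.conullFilter hμ := by simpa [IP0Aux.conullFilter] using hA
    have hAc : Aᶜ ∈ U := hU this
    exact (Ultrafilter.compl_mem_iff_notMem.mp hAc) hAU
  have hmul : ∀ U ∈ D, ∀ V ∈ D, U * V ∈ D := by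
    intro U hU V hV A hA
    rw [IP0Aux.mem_revMul] at hA
    obtain ⟨x, hx⟩ := IP0Aux.nonempty_of_pos hμ (hU _ hA)
    have := hV _ hx
    rwa [IP0Aux.mu_right_shift hμ] at this
  obtain ⟨U, hUD, hidem⟩ :=
    exists_idempotent_in_compact_subsemigroup IP0Aux.continuous_revMul_left D hne
      hclosed.isCompact hmul
  exact ⟨U, hidem, hUD⟩

end RevSemigroup

section FPLemmas
variable {G : Type*} [Group G]

theorem IP0Aux.FPdec_single (x : G) : FPdec ![x] = {x} := by
  ext g
  constructor
  · rintro ⟨F, hF, rfl⟩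
    have hF1 : F = {0} := by
      ext i
      simp only [Finset.mem_singleton]
      constructor
      · intro _; exact Fin.fin_one_eq_zero i
      · rintro rfl
        obtain ⟨j, hj⟩ := hF
        exact (Fin.fin_one_eq_zero j) ▸ hj
    subst hF1
    simp [Finset.sort_singleton]
  · rintro rfl
    exact ⟨{0}, ⟨0, Finset.mem_singleton_self 0⟩, by simp [Finset.sort_singleton]⟩

/-- Sorting commutes with the `Fin.succ` shift. -/
theorem IP0Aux.sort_shift {k : ℕ} (F : Finset (Fin (k + 2))) (h0 : (0 : Fin (k + 2)) ∉ F) :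
    ∃ F' : Finset (Fin (k + 1)),
      (F'.Nonempty ↔ F.Nonempty) ∧ F.sort (· ≤ ·) = (F'.sort (· ≤ ·)).map Fin.succ := by
  classical
  refine ⟨F.preimage Fin.succ (Fin.succ_injective _).injOn, ?_, ?_⟩
  · constructor
    · rintro ⟨j, hj⟩
      rw [Finset.mem_preimage] at hj
      exact ⟨_, hj⟩
    · rintro ⟨i, hi⟩
      have hi0 : i ≠ 0 := fun h => h0 (h ▸ hi)
      obtain ⟨j, rfl⟩ := Fin.exists_succ_eq.mpr hi0
      exact ⟨j, by rwa [Finset.mem_preimage]⟩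
  · have hmap : (F.preimage Fin.succ (Fin.succ_injective _).injOn).map
        ⟨Fin.succ, Fin.succ_injective _⟩ = F := by
      ext i
      simp only [Finset.mem_map, Finset.mem_preimage, Function.Embedding.coeFn_mk]
      constructor
      · rintro ⟨j, hj, rfl⟩; exact hj
      · intro hi
        have hi0 : i ≠ 0 := fun h => h0 (h ▸ hi)
        obtain ⟨j, rfl⟩ := Fin.exists_succ_eq.mpr hi0
        exact ⟨j, hi, rfl⟩
    set F' := F.preimage Fin.succ (Fin.succ_injective _).injOn with hF'
    have hperm : List.Perm ((F'.sort (· ≤ ·)).map Fin.succ) (F.sort (· ≤ ·)) := by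
      rw [← Multiset.coe_eq_coe, ← Multiset.map_coe, Finset.sort_eq, Finset.sort_eq, ← hmap,
        Finset.map_val]
      rfl
    have hsorted : ((F'.sort (· ≤ ·)).map Fin.succ).Pairwise (· ≤ ·) :=
      List.Pairwise.map _ (fun a b hab => Fin.succ_le_succ_iff.mpr hab) (Finset.pairwise_sort _ _)
    exact (List.Perm.eq_of_pairwise' hsorted (Finset.pairwise_sort _ _) hperm).symm

theorem IP0Aux.FPdec_cons_subset {k : ℕ} (x₀ : G) (x : Fin (k + 1) → G) :
    FPdec (Fin.cons x₀ x) ⊆ insert x₀ (FPdec x ∪ (· * x₀) '' FPdec x) := by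
  rintro g ⟨F, hFne, rfl⟩
  by_cases h0 : (0 : Fin (k + 2)) ∈ F
  · rcases (F.erase 0).eq_empty_or_nonempty with hE | hE
    · have hF1 : F = {0} := by
        ext i
        simp only [Finset.mem_singleton]
        constructor
        · intro hi
          by_contra hne
          have : i ∈ F.erase 0 := Finset.mem_erase.mpr ⟨hne, hi⟩
          simp [hE] at this
        · rintro rfl; exact h0
      subst hF1
      left
      simp [Finset.sort_singleton]
    · obtain ⟨F', hF'ne, hsort⟩ := IP0Aux.sort_shift (F.erase 0) (Finset.notMem_erase _ _)
      have hsortF : F.sort (· ≤ ·) = 0 :: (F.erase 0).sort (· ≤ ·) := by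
        conv_lhs => rw [← Finset.insert_erase h0]
        exact Finset.sort_insert _ (fun b _ => Fin.zero_le b) (Finset.notMem_erase _ _)
      right; right
      refine ⟨((F'.sort (· ≤ ·)).reverse.map x).prod, ⟨F', hF'ne.mpr hE, rfl⟩, ?_⟩
      rw [hsortF, hsort]
      simp [List.map_reverse, List.map_map, Function.comp_def]
  · obtain ⟨F', hF'ne, hsort⟩ := IP0Aux.sort_shift F h0
    right; left
    refine ⟨F', hF'ne.mpr hFne, ?_⟩
    rw [hsort]
    simp [List.map_reverse, List.map_map, Function.comp_def]

end FPLemmas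

section ManyLemmas
variable {G : Type*} [Group G] {μ : Set G → ℝ}

omit [Group G] in
theorem IP0Aux.many_zero (P : (Fin 1 → G) → Prop) : Many μ 0 P ↔ 0 < μ {x | P ![x]} := Iff.rfl

omit [Group G] in
theorem IP0Aux.many_succ (k : ℕ) (P : (Fin (k + 2) → G) → Prop) :
    Many μ (k + 1) P ↔ 0 < μ {x₀ | Many μ k fun x => P (Fin.cons x₀ x)} := Iff.rfl

theorem IP0Aux.many_mono (hμ : IsInvFAPM μ) :
    ∀ {k : ℕ} {P Q : (Fin (k + 1) → G) → Prop}, (∀ x, P x → Q x) → Many μ k P → Many μ k Q := by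
  intro k
  induction k with
  | zero =>
    intro P Q hPQ hP
    rw [IP0Aux.many_zero] at *
    exact IP0Aux.pos_of_subset hμ (fun a ha => hPQ _ ha) hP
  | succ k ih =>
    intro P Q hPQ hP
    rw [IP0Aux.many_succ] at *
    refine IP0Aux.pos_of_subset hμ (fun x₀ hx₀ => ?_) hP
    exact ih (fun x hx => hPQ _ hx) hx₀

attribute [local instance] IP0Aux.revMul IP0Aux.revSemigroup

theorem IP0Aux.many_FP (hμ : IsInvFAPM μ) {U : Ultrafilter G} (hidem : U * U = U)
    (hU : ∀ A : Set G, A ∈ U → 0 < μ A) :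
    ∀ (k : ℕ) (A : Set G), A ∈ U → Many μ k fun x => FPdec x ⊆ A := by
  intro k
  induction k with
  | zero =>
    intro A hA
    rw [IP0Aux.many_zero]
    refine IP0Aux.pos_of_subset hμ (fun a ha => ?_) (hU A hA)
    rw [Set.mem_setOf_eq, IP0Aux.FPdec_single]
    simpa using ha
  | succ k ih =>
    intro A hA
    rw [IP0Aux.many_succ]
    have hA2 : {x₀ | {y | y * x₀ ∈ A} ∈ U} ∈ U := by
      rw [← hidem] at hA
      exact IP0Aux.mem_revMul.mp hA
    have hB : A ∩ {x₀ | {y | y * x₀ ∈ A} ∈ U} ∈ U := Filter.inter_mem hA hA2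
    refine IP0Aux.pos_of_subset hμ ?_ (hU _ hB)
    rintro x₀ ⟨hx₀A, hx₀⟩
    have hA' : A ∩ {y | y * x₀ ∈ A} ∈ U := Filter.inter_mem hA hx₀
    refine IP0Aux.many_mono hμ (fun x hx => ?_) (ih _ hA')
    intro g hg
    rcases IP0Aux.FPdec_cons_subset x₀ x hg with rfl | hg' | ⟨h, hh, rfl⟩
    · exact hx₀A
    · exact (hx hg').1
    · exact (hx hh).2

end ManyLemmas

theorem exists_largeIP0_color_class {G : Type*} [Group G] (μ : Set G → ℝ)
    (hμ : IsInvFAPM μ) (r : ℕ) (c : G → Fin r) :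
    ∃ i : Fin r, LargeIP0 μ (c ⁻¹' {i}) := by
  obtain ⟨U, hidem, hU⟩ := IP0Aux.exists_good_idem hμ
  have hcolor : ∃ i : Fin r, c ⁻¹' {i} ∈ U := by
    by_contra h
    push_neg at h
    have hall : ∀ i : Fin r, (c ⁻¹' {i})ᶜ ∈ U := fun i =>
      Ultrafilter.compl_mem_iff_notMem.mpr (h i)
    have : (⋂ i : Fin r, (c ⁻¹' {i})ᶜ) ∈ U := Filter.iInter_mem.mpr hall
    have hempty : (⋂ i : Fin r, (c ⁻¹' {i})ᶜ) = (∅ : Set G) := by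
      ext g
      simp only [Set.mem_iInter, Set.mem_compl_iff, Set.mem_preimage, Set.mem_singleton_iff,
        Set.mem_empty_iff_false, iff_false, not_forall, not_not]
      exact ⟨c g, rfl⟩
    rw [hempty] at this
    exact Ultrafilter.empty_notMem this
  obtain ⟨i, hi⟩ := hcolor
  exact ⟨i, fun k => IP0Aux.many_FP hμ hidem hU k _ hi⟩
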